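/- arXiv:1812.05551 — 2 statements merged into one kernel-verified Lean document; each statement's English description precedes it below -/
import Mathlib

section
/- (Bias–sensitivity tradeoff for ε-greedy) Suppose ‖v*_α - v̂‖_∞ = δ and π̂ is greedy w.r.t. v̂ in the original MDP. Then ‖v* - v^{π^α(π̂,π₀)}‖_∞ ≤ αL/(1-γ) + 2(1-α)γδ/(1-γ), where L = max_s (v*(s) - T^{π₀}v*(s)). -/
open Finset

/-- One-step return for state `s`, action `a`, value `v`. -/
noncomputable def qOf {S A : Type*} [Fintype S] (γ : ℝ)
    (r : S → A → ℝ) (P : S → A → S → ℝ) (v : S → ℝ) (s : S) (a : A) : ℝ :=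
  r s a + γ * ∑ s', P s a s' * v s'

/-- Fixed-policy Bellman operator. -/
noncomputable def Tpol {S A : Type*} [Fintype S] [Fintype A] (γ : ℝ)
    (r : S → A → ℝ) (P : S → A → S → ℝ) (π : S → A → ℝ) (v : S → ℝ) : S → ℝ :=
  fun s => ∑ a, π s a * qOf γ r P v s a

/-- Optimal Bellman operator. -/
noncomputable def Topt {S A : Type*} [Fintype S] [Fintype A] (γ : ℝ)
    (r : S → A → ℝ) (P : S → A → S → ℝ) (v : S → ℝ) : S → ℝ :=
  fun s => ⨆ a : A, qOf γ r P v s a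
/-- Mixture policy `π^c(π₁,π₂) = (1-c)π₁ + c π₂`. -/
noncomputable def mixPol {S A : Type*} (c : ℝ) (π1 π2 : S → A → ℝ) : S → A → ℝ :=
  fun s a => (1 - c) * π1 s a + c * π2 s a

/-! Split `v* - v^{π^α(π̂,π₀)}` through `v*_α`. At each state both differences are
`(1 - α, α)`-combinations of differences of γ-Lipschitz Bellman operators, which gives
`‖x‖ ≤ c + γ ‖x‖` and hence `‖x‖ ≤ c / (1 - γ)`. For the bias the extra term is
`α (v* - T^{π₀} v*) ∈ [0, α L]`; for the sensitivity, greediness turns `T v̂` into `T^{π̂} v̂`, and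
`‖v̂ - v^{π^α}‖ ≤ δ + ‖v*_α - v^{π^α}‖` costs `2 γ δ` on the `(1 - α)`-share. -/

lemma sum_mul_le_of_mem_stdSimplex {ι : Type*} [Fintype ι] {p f : ι → ℝ} {c : ℝ}
    (hp : p ∈ stdSimplex ℝ ι) (hf : ∀ i, f i ≤ c) : ∑ i, p i * f i ≤ c :=
  calc ∑ i, p i * f i ≤ ∑ i, p i * c :=
        sum_le_sum fun i _ => mul_le_mul_of_nonneg_left (hf i) (hp.1 i)
    _ = c := by rw [← sum_mul, hp.2, one_mul]

lemma abs_sum_mul_le_of_mem_stdSimplex {ι : Type*} [Fintype ι] {p f : ι → ℝ} {c : ℝ}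
    (hp : p ∈ stdSimplex ℝ ι) (hf : ∀ i, |f i| ≤ c) : |∑ i, p i * f i| ≤ c := by
  refine abs_le.2 ⟨?_, sum_mul_le_of_mem_stdSimplex hp fun i => (abs_le.1 (hf i)).2⟩
  have := sum_mul_le_of_mem_stdSimplex hp (f := fun i => -f i)
    fun i => neg_le.1 (abs_le.1 (hf i)).1
  simp only [mul_neg, sum_neg_distrib] at this
  linarith

lemma abs_ciSup_sub_ciSup_le {ι : Type*} [Finite ι] [Nonempty ι] {f g : ι → ℝ} {c : ℝ}
    (h : ∀ i, |f i - g i| ≤ c) : |(⨆ i, f i) - ⨆ i, g i| ≤ c := by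
  have key : ∀ f g : ι → ℝ, (∀ i, f i - g i ≤ c) → (⨆ i, f i) - ⨆ i, g i ≤ c :=
    fun f g h => sub_le_iff_le_add.2 <| ciSup_le fun i => by
      linarith [h i, le_ciSup (Set.finite_range g).bddAbove i]
  refine abs_sub_le_iff.2 ⟨key f g fun i => (abs_le.1 (h i)).2, key g f fun i => ?_⟩
  linarith [(abs_le.1 (h i)).1]

lemma abs_one_sub_mul_add_mul_le {α x y a b : ℝ} (hα : α ∈ Set.Icc (0 : ℝ) 1)
    (hx : |x| ≤ a) (hy : |y| ≤ b) : |(1 - α) * x + α * y| ≤ (1 - α) * a + α * b := by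
  obtain ⟨hα0, hα1⟩ := hα
  calc |(1 - α) * x + α * y| ≤ |(1 - α) * x| + |α * y| := abs_add_le _ _
    _ = (1 - α) * |x| + α * |y| := by
      rw [abs_mul, abs_mul, abs_of_nonneg (sub_nonneg.2 hα1), abs_of_nonneg hα0]
    _ ≤ (1 - α) * a + α * b := by gcongr

lemma norm_le_div_one_sub_of_abs_le {S : Type*} [Fintype S] [Nonempty S] {x : S → ℝ}
    {c γ : ℝ} (hγ : γ < 1) (h : ∀ s, |x s| ≤ c + γ * ‖x‖) : ‖x‖ ≤ c / (1 - γ) := by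
  have : ‖x‖ ≤ c + γ * ‖x‖ := (pi_norm_le_iff_of_nonempty x).2 h
  rw [le_div_iff₀ (sub_pos.2 hγ)]
  linarith

section Bellman

variable {S A : Type*} [Fintype S] {γ : ℝ} {r : S → A → ℝ} {P : S → A → S → ℝ}

lemma abs_qOf_sub_qOf_le (hγ : 0 ≤ γ) {s : S} {a : A} (hP : P s a ∈ stdSimplex ℝ S)
    (v w : S → ℝ) : |qOf γ r P v s a - qOf γ r P w s a| ≤ γ * ‖v - w‖ := by
  have hdiff : qOf γ r P v s a - qOf γ r P w s a = γ * ∑ s', P s a s' * (v - w) s' := by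
    simp only [qOf, Pi.sub_apply, mul_sub, sum_sub_distrib]
    ring
  rw [hdiff, abs_mul, abs_of_nonneg hγ]
  gcongr
  exact abs_sum_mul_le_of_mem_stdSimplex hP fun s' => by
    simpa only [Real.norm_eq_abs] using norm_le_pi_norm (v - w) s'

variable [Fintype A]

/-- The operator `T_α = (1 - α) T + α T^{π₀}`. -/
noncomputable def Tmix (γ : ℝ) (r : S → A → ℝ) (P : S → A → S → ℝ) (α : ℝ)
    (π0 : S → A → ℝ) (v : S → ℝ) : S → ℝ :=
  fun s => (1 - α) * Topt γ r P v s + α * Tpol γ r P π0 v s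

lemma abs_Tpol_sub_Tpol_le (hγ : 0 ≤ γ) (hP : ∀ s a, P s a ∈ stdSimplex ℝ S)
    {π : S → A → ℝ} {s : S} (hπ : π s ∈ stdSimplex ℝ A) (v w : S → ℝ) :
    |Tpol γ r P π v s - Tpol γ r P π w s| ≤ γ * ‖v - w‖ := by
  have hdiff : Tpol γ r P π v s - Tpol γ r P π w s
      = ∑ a, π s a * (qOf γ r P v s a - qOf γ r P w s a) := by
    simp only [Tpol, mul_sub, sum_sub_distrib]
  rw [hdiff]
  exact abs_sum_mul_le_of_mem_stdSimplex hπ fun a => abs_qOf_sub_qOf_le hγ (hP s a) v w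

lemma Tpol_le_Topt {π : S → A → ℝ} {s : S} (hπ : π s ∈ stdSimplex ℝ A) (v : S → ℝ) :
    Tpol γ r P π v s ≤ Topt γ r P v s :=
  sum_mul_le_of_mem_stdSimplex hπ fun a => le_ciSup (Set.finite_range _).bddAbove a

lemma Tpol_mixPol (c : ℝ) (π1 π2 : S → A → ℝ) (v : S → ℝ) (s : S) :
    Tpol γ r P (mixPol c π1 π2) v s = (1 - c) * Tpol γ r P π1 v s + c * Tpol γ r P π2 v s := by
  simp only [Tpol, mixPol, add_mul, sum_add_distrib, mul_sum, mul_assoc]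

variable [Nonempty A]

lemma abs_Topt_sub_Topt_le (hγ : 0 ≤ γ) (hP : ∀ s a, P s a ∈ stdSimplex ℝ S)
    (v w : S → ℝ) (s : S) : |Topt γ r P v s - Topt γ r P w s| ≤ γ * ‖v - w‖ :=
  abs_ciSup_sub_ciSup_le fun a => abs_qOf_sub_qOf_le hγ (hP s a) v w

variable [Nonempty S] {α : ℝ} {π0 : S → A → ℝ}

lemma norm_sub_fixedPoint_Tmix_le (hγ0 : 0 ≤ γ) (hγ1 : γ < 1) (hα : α ∈ Set.Icc (0 : ℝ) 1)
    (hP : ∀ s a, P s a ∈ stdSimplex ℝ S) (hπ0 : ∀ s, π0 s ∈ stdSimplex ℝ A)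
    {vstar vα : S → ℝ} {L : ℝ}
    (hstar : Topt γ r P vstar = vstar) (hvα : Tmix γ r P α π0 vα = vα)
    (hL : ∀ s, vstar s - Tpol γ r P π0 vstar s ≤ L) :
    ‖vstar - vα‖ ≤ α * L / (1 - γ) := by
  refine norm_le_div_one_sub_of_abs_le hγ1 fun s => ?_
  set d := ‖vstar - vα‖
  have hsplit : vstar s - vα s = (1 - α) * (Topt γ r P vstar s - Topt γ r P vα s)
      + α * ((vstar s - Tpol γ r P π0 vstar s)
        + (Tpol γ r P π0 vstar s - Tpol γ r P π0 vα s)) := by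
    have hvαs : (1 - α) * Topt γ r P vα s + α * Tpol γ r P π0 vα s = vα s := congrFun hvα s
    linear_combination (α - 1) * congrFun hstar s + hvαs
  have hgap : |vstar s - Tpol γ r P π0 vstar s| ≤ L := by
    rw [abs_of_nonneg (sub_nonneg.2 (congrFun hstar s ▸ Tpol_le_Topt (hπ0 s) vstar))]
    exact hL s
  calc |vstar s - vα s| ≤ (1 - α) * (γ * d) + α * (L + γ * d) := by
        rw [hsplit]
        exact abs_one_sub_mul_add_mul_le hα (abs_Topt_sub_Topt_le hγ0 hP vstar vα s)
          ((abs_add_le _ _).trans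
            (add_le_add hgap (abs_Tpol_sub_Tpol_le hγ0 hP (hπ0 s) _ _)))
    _ = α * L + γ * d := by ring

lemma norm_fixedPoint_Tmix_sub_value_mixPol_greedy_le (hγ0 : 0 ≤ γ) (hγ1 : γ < 1)
    (hα : α ∈ Set.Icc (0 : ℝ) 1) (hP : ∀ s a, P s a ∈ stdSimplex ℝ S)
    (hπ0 : ∀ s, π0 s ∈ stdSimplex ℝ A) {πhat : S → A → ℝ} (hπhat : ∀ s, πhat s ∈ stdSimplex ℝ A)
    {vα vhat vmix : S → ℝ} {δ : ℝ} (hvα : Tmix γ r P α π0 vα = vα) (hδ : ‖vα - vhat‖ ≤ δ)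
    (hgreedy : Tpol γ r P πhat vhat = Topt γ r P vhat)
    (hvmix : Tpol γ r P (mixPol α πhat π0) vmix = vmix) :
    ‖vα - vmix‖ ≤ 2 * (1 - α) * γ * δ / (1 - γ) := by
  refine norm_le_div_one_sub_of_abs_le hγ1 fun s => ?_
  set d := ‖vα - vmix‖
  have hsplit : vα s - vmix s = (1 - α) * ((Topt γ r P vα s - Topt γ r P vhat s)
      + (Tpol γ r P πhat vhat s - Tpol γ r P πhat vmix s))
      + α * (Tpol γ r P π0 vα s - Tpol γ r P π0 vmix s) := by
    have hvαs : (1 - α) * Topt γ r P vα s + α * Tpol γ r P π0 vα s = vα s := congrFun hvα s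
    have hvmixs := congrFun hvmix s
    rw [Tpol_mixPol] at hvmixs
    linear_combination (α - 1) * congrFun hgreedy s - hvαs + hvmixs
  have hvhat : ‖vhat - vmix‖ ≤ δ + d :=
    (norm_sub_le_norm_sub_add_norm_sub vhat vα vmix).trans
      (add_le_add_left (norm_sub_rev vhat vα ▸ hδ) d)
  have hgreedy_step : |(Topt γ r P vα s - Topt γ r P vhat s)
      + (Tpol γ r P πhat vhat s - Tpol γ r P πhat vmix s)| ≤ γ * δ + γ * (δ + d) :=
    (abs_add_le _ _).trans <| add_le_add
      ((abs_Topt_sub_Topt_le hγ0 hP vα vhat s).trans (by gcongr))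
      ((abs_Tpol_sub_Tpol_le hγ0 hP (hπhat s) vhat vmix).trans (by gcongr))
  calc |vα s - vmix s| ≤ (1 - α) * (γ * δ + γ * (δ + d)) + α * (γ * d) := by
        rw [hsplit]
        exact abs_one_sub_mul_add_mul_le hα hgreedy_step
          (abs_Tpol_sub_Tpol_le hγ0 hP (hπ0 s) _ _)
    _ = 2 * (1 - α) * γ * δ + γ * d := by ring

end Bellman

/-- Bias–sensitivity tradeoff for ε-greedy. If `‖v*_α - v̂‖ = δ`
and π̂ is greedy w.r.t. `v̂` in the original MDP, then
`‖v* - v^{π^α(π̂,π₀)}‖ ≤ αL/(1-γ) + 2(1-α)γδ/(1-γ)` with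
`L = max_s (v*(s) - T^{π₀}v*(s))`. -/
theorem bias_sensitivity_tradeoff
    {S A : Type*} [Fintype S] [Fintype A] [Nonempty S] [Nonempty A]
    (γ α δ : ℝ) (hγ0 : 0 ≤ γ) (hγ1 : γ < 1) (hα : α ∈ Set.Icc (0 : ℝ) 1)
    (r : S → A → ℝ) (P : S → A → S → ℝ) (π0 πhat : S → A → ℝ)
    (hP : ∀ s a, (∀ s', 0 ≤ P s a s') ∧ ∑ s', P s a s' = 1)
    (hπ0 : ∀ s, (∀ a, 0 ≤ π0 s a) ∧ ∑ a, π0 s a = 1)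
    (hπhat : ∀ s, (∀ a, 0 ≤ πhat s a) ∧ ∑ a, πhat s a = 1)
    (vstar vα vhat vmix : S → ℝ)
    (hstar : Topt γ r P vstar = vstar)
    (hvα : (fun s => (1 - α) * Topt γ r P vα s + α * Tpol γ r P π0 vα s) = vα)
    (hδ : ‖vα - vhat‖ = δ)
    (hgreedy : Tpol γ r P πhat vhat = Topt γ r P vhat)
    (hvmix : Tpol γ r P (mixPol α πhat π0) vmix = vmix)
    (L : ℝ) (hL : L = ⨆ s : S, (vstar s - Tpol γ r P π0 vstar s)) :
    ‖vstar - vmix‖ ≤ α * L / (1 - γ) + 2 * (1 - α) * γ * δ / (1 - γ) := by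
  have hLs : ∀ s, vstar s - Tpol γ r P π0 vstar s ≤ L := fun s =>
    hL ▸ le_ciSup (f := fun s => vstar s - Tpol γ r P π0 vstar s)
      (Set.finite_range _).bddAbove s
  calc ‖vstar - vmix‖ ≤ ‖vstar - vα‖ + ‖vα - vmix‖ :=
        norm_sub_le_norm_sub_add_norm_sub _ _ _
    _ ≤ _ := add_le_add (norm_sub_fixedPoint_Tmix_le hγ0 hγ1 hα hP hπ0 hstar hvα hLs)
      (norm_fixedPoint_Tmix_sub_value_mixPol_greedy_le hγ0 hγ1 hα hP hπ0 hπhat hvα hδ.le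
        hgreedy hvmix)
end

section
/- Let q*_α be the optimal q-function of the surrogate MDP M_α, satisfying q*_α(s,a) = r_α(s,a) + γ Σ_{s'} P_α(s'|s,a) max_{a'} q*_α(s',a'). Then q*_α(s,a) = (1-α) q^E(s,a) + f(s), where q^E is the expected α-optimal q-function (fixed point of T^{Eq}_α) and f(s) = α Σ_{a'} π₀(a'|s) q^E(s,a') depends only on the state. Consequently argmax_a q*_α(s,a) = argmax_a q^E(s,a) for every state s. -/
/-!
Put `g s a = (1 - α) q^E(s,a) + α Σ_a' π₀(a'|s) q^E(s,a')`. As `g s` is a positive multiple of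
`q^E s` plus a constant, `max g(s',·)` is exactly the continuation value that `T^{Eq}_α` assigns
to `s'`, so `q^E = r + γ P (max g)`. Averaging this identity with the weights `1 - α` (the action
taken) and `α π₀` (the base policy) turns it into the Bellman optimality equation of `M_α` for `g`.
The kernel `P_α` is stochastic, so the Bellman operator of `M_α` is a `γ`-contraction in the sup
norm and `q*_α = g`; the argmax sets agree because `1 - α > 0`.
-/

open Finset

/-- The expected α-optimal Bellman q-operator `T^{Eq}_α`. -/
noncomputable def TEq {S A : Type*} [Fintype S] [Fintype A] (γ α : ℝ)
    (r : S → A → ℝ) (P : S → A → S → ℝ) (π0 : S → A → ℝ)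
    (q : S → A → ℝ) : S → A → ℝ := fun s a =>
  r s a + γ * (1 - α) * ∑ s', P s a s' * (⨆ a' : A, q s' a')
        + γ * α * ∑ s', P s a s' * ∑ a', π0 s' a' * q s' a'

section Sup

variable {A : Type*}

theorem ciSup_mul_add [Finite A] [Nonempty A] (f : A → ℝ) {k : ℝ} (hk : 0 ≤ k) (c : ℝ) :
    ⨆ a, (k * f a + c) = (k * ⨆ a, f a) + c := by
  have hmono : Monotone fun x : ℝ => k * x + c := fun _ _ h => by dsimp only; gcongr
  exact (hmono.map_ciSup_of_continuousAt (by fun_prop) (Finite.bddAbove_range f)).symm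

theorem ciSup_le_ciSup_add_dist [Fintype A] [Nonempty A] (f g : A → ℝ) :
    ⨆ a, f a ≤ (⨆ a, g a) + dist f g :=
  ciSup_le fun a => by
    have hfg : f a - g a ≤ dist f g :=
      (le_abs_self _).trans ((Real.dist_eq _ _).symm.trans_le (dist_le_pi_dist f g a))
    linarith [le_ciSup (Finite.bddAbove_range g) a]

theorem dist_ciSup_le [Fintype A] [Nonempty A] (f g : A → ℝ) :
    dist (⨆ a, f a) (⨆ a, g a) ≤ dist f g := by
  rw [Real.dist_eq, abs_sub_le_iff]
  constructor
  · linarith [ciSup_le_ciSup_add_dist f g]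
  · linarith [ciSup_le_ciSup_add_dist g f, dist_comm f g]

theorem setOf_forall_mul_add_le (f : A → ℝ) {k : ℝ} (hk : 0 < k) (c : ℝ) :
    {a | ∀ b, k * f b + c ≤ k * f a + c} = {a | ∀ b, f b ≤ f a} := by
  ext a
  simp only [Set.mem_ofPred_eq, add_le_add_iff_right, mul_le_mul_iff_right₀ hk]

end Sup

section Bellman

variable {S A : Type*} [Fintype S]

noncomputable def bellmanOptQ (γ : ℝ) (r : S → A → ℝ) (P : S → A → S → ℝ) (q : S → A → ℝ) :
    S → A → ℝ :=
  qOf γ r P fun s' => ⨆ a', q s' a'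

theorem dist_qOf_le {γ : ℝ} (hγ : 0 ≤ γ) (r : S → A → ℝ) {P : S → A → S → ℝ}
    (hP : ∀ s a, P s a ∈ stdSimplex ℝ S) (v w : S → ℝ) (s : S) (a : A) :
    dist (qOf γ r P v s a) (qOf γ r P w s a) ≤ γ * dist v w := by
  have hdiff : qOf γ r P v s a - qOf γ r P w s a = γ * ∑ s', P s a s' * (v s' - w s') := by
    simp only [qOf, mul_sub, Finset.sum_sub_distrib]
    ring
  rw [Real.dist_eq, hdiff, abs_mul, abs_of_nonneg hγ]
  gcongr
  calc |∑ s', P s a s' * (v s' - w s')|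
      ≤ ∑ s', P s a s' * dist v w := by
        refine (Finset.abs_sum_le_sum_abs _ _).trans (Finset.sum_le_sum fun s' _ => ?_)
        rw [abs_mul, abs_of_nonneg ((hP s a).1 s'), ← Real.dist_eq]
        exact mul_le_mul_of_nonneg_left (dist_le_pi_dist v w s') ((hP s a).1 s')
    _ = dist v w := by rw [← Finset.sum_mul, (hP s a).2, one_mul]

variable [Fintype A]

noncomputable def surrogateReward (α : ℝ) (r π0 : S → A → ℝ) : S → A → ℝ :=
  fun s a => (1 - α) * r s a + α * ∑ b, π0 s b * r s b

noncomputable def surrogateKernel (α : ℝ) (P : S → A → S → ℝ) (π0 : S → A → ℝ) :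
    S → A → S → ℝ :=
  fun s a s' => (1 - α) * P s a s' + α * ∑ b, π0 s b * P s b s'

noncomputable def mixQ (α : ℝ) (π0 q : S → A → ℝ) : S → A → ℝ :=
  fun s a => (1 - α) * q s a + α * ∑ a', π0 s a' * q s a'

theorem dist_bellmanOptQ_le [Nonempty A] {γ : ℝ} (hγ : 0 ≤ γ) (r : S → A → ℝ)
    {P : S → A → S → ℝ} (hP : ∀ s a, P s a ∈ stdSimplex ℝ S) (q₁ q₂ : S → A → ℝ) :
    dist (bellmanOptQ γ r P q₁) (bellmanOptQ γ r P q₂) ≤ γ * dist q₁ q₂ := by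
  have hsup : dist (fun s' => ⨆ a', q₁ s' a') (fun s' => ⨆ a', q₂ s' a') ≤ dist q₁ q₂ :=
    (dist_pi_le_iff dist_nonneg).2 fun s' =>
      (dist_ciSup_le (q₁ s') (q₂ s')).trans (dist_le_pi_dist q₁ q₂ s')
  refine (dist_pi_le_iff (by positivity)).2 fun s => (dist_pi_le_iff (by positivity)).2 fun a => ?_
  exact (dist_qOf_le hγ r hP _ _ s a).trans (mul_le_mul_of_nonneg_left hsup hγ)

theorem bellmanOptQ_fixedPoint_unique [Nonempty A] {γ : ℝ} (hγ0 : 0 ≤ γ) (hγ1 : γ < 1)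
    (r : S → A → ℝ) {P : S → A → S → ℝ} (hP : ∀ s a, P s a ∈ stdSimplex ℝ S)
    {q₁ q₂ : S → A → ℝ} (h₁ : bellmanOptQ γ r P q₁ = q₁) (h₂ : bellmanOptQ γ r P q₂ = q₂) :
    q₁ = q₂ := by
  have hle := dist_bellmanOptQ_le hγ0 r hP q₁ q₂
  rw [h₁, h₂] at hle
  exact dist_le_zero.1 (by nlinarith [dist_nonneg (x := q₁) (y := q₂)])

theorem surrogateKernel_mem_stdSimplex {α : ℝ} (hα0 : 0 ≤ α) (hα1 : α ≤ 1)
    {P : S → A → S → ℝ} (hP : ∀ s a, P s a ∈ stdSimplex ℝ S) {π0 : S → A → ℝ}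
    (hπ0 : ∀ s, π0 s ∈ stdSimplex ℝ A) (s : S) (a : A) :
    surrogateKernel α P π0 s a ∈ stdSimplex ℝ S := by
  have hmix : ∑ b, π0 s b • P s b ∈ stdSimplex ℝ S :=
    (convex_stdSimplex ℝ S).sum_mem (fun b _ => (hπ0 s).1 b) (hπ0 s).2 fun b _ => hP s b
  have hconv := convex_stdSimplex ℝ S (hP s a) hmix (sub_nonneg.2 hα1) hα0 (by ring)
  convert hconv using 1
  ext s'
  simp [surrogateKernel, Finset.sum_apply]

theorem qOf_surrogate (γ α : ℝ) (r : S → A → ℝ) (P : S → A → S → ℝ) (π0 : S → A → ℝ)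
    (u : S → ℝ) (s : S) (a : A) :
    qOf γ (surrogateReward α r π0) (surrogateKernel α P π0) u s a =
      (1 - α) * qOf γ r P u s a + α * ∑ b, π0 s b * qOf γ r P u s b := by
  simp only [qOf, surrogateReward, surrogateKernel, add_mul, Finset.sum_add_distrib,
    Finset.sum_mul, Finset.mul_sum, mul_add]
  rw [Finset.sum_comm (γ := A)]
  simp only [mul_assoc, mul_left_comm]
  ring

theorem TEq_apply_eq_qOf (γ α : ℝ) (r : S → A → ℝ) (P : S → A → S → ℝ) (π0 q : S → A → ℝ)
    (s : S) (a : A) :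
    TEq γ α r P π0 q s a =
      qOf γ r P (fun s' => (1 - α) * (⨆ a', q s' a') + α * ∑ a', π0 s' a' * q s' a') s a := by
  simp only [TEq, qOf, mul_add, Finset.sum_add_distrib, Finset.mul_sum]
  ring_nf

theorem bellmanOptQ_surrogate_mixQ [Nonempty A] {γ α : ℝ} (hα1 : α ≤ 1)
    {r : S → A → ℝ} {P : S → A → S → ℝ} {π0 qE : S → A → ℝ} (hqE : TEq γ α r P π0 qE = qE) :
    bellmanOptQ γ (surrogateReward α r π0) (surrogateKernel α P π0) (mixQ α π0 qE) =
      mixQ α π0 qE := by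
  have hsup : (fun s' => ⨆ a', mixQ α π0 qE s' a') =
      fun s' => (1 - α) * (⨆ a', qE s' a') + α * ∑ a', π0 s' a' * qE s' a' :=
    funext fun s' => by simp only [mixQ]; exact ciSup_mul_add (qE s') (sub_nonneg.2 hα1) _
  have hqE' : ∀ s a, qE s a = qOf γ r P (fun s' => ⨆ a', mixQ α π0 qE s' a') s a := by
    intro s a
    rw [hsup, ← TEq_apply_eq_qOf, hqE]
  funext s a
  simp only [bellmanOptQ, qOf_surrogate, ← hqE']
  rfl

end Bellman

theorem surrogate_q_eq_expected_q_up_to_state_function_general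
    {S A : Type*} [Fintype S] [Fintype A] [Nonempty A]
    (γ α : ℝ) (hγ0 : 0 ≤ γ) (hγ1 : γ < 1) (hα0 : 0 ≤ α) (hα1 : α < 1)
    (r : S → A → ℝ) (P : S → A → S → ℝ) (π0 : S → A → ℝ)
    (hP : ∀ s a, (∀ s', 0 ≤ P s a s') ∧ ∑ s', P s a s' = 1)
    (hπ0 : ∀ s, (∀ a, 0 ≤ π0 s a) ∧ ∑ a, π0 s a = 1)
    (qα qE : S → A → ℝ)
    (hqα : ∀ s a, qα s a =
      ((1 - α) * r s a + α * ∑ b, π0 s b * r s b)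
        + γ * ∑ s', ((1 - α) * P s a s' + α * ∑ b, π0 s b * P s b s')
            * (⨆ a' : A, qα s' a'))
    (hqE : TEq γ α r P π0 qE = qE) :
    (∀ s a, qα s a = (1 - α) * qE s a + α * ∑ a', π0 s a' * qE s a') ∧
      ∀ s : S, {a : A | ∀ b, qα s b ≤ qα s a} = {a : A | ∀ b, qE s b ≤ qE s a} := by
  have hfix : bellmanOptQ γ (surrogateReward α r π0) (surrogateKernel α P π0) qα = qα :=
    funext₂ fun s a => (hqα s a).symm
  have hq : qα = mixQ α π0 qE :=
    bellmanOptQ_fixedPoint_unique hγ0 hγ1 _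
      (surrogateKernel_mem_stdSimplex hα0 hα1.le hP hπ0) hfix
      (bellmanOptQ_surrogate_mixQ hα1.le hqE)
  subst hq
  exact ⟨fun s a => rfl, fun s => setOf_forall_mul_add_le (qE s) (sub_pos.2 hα1) _⟩

/-- The optimal q-function `q*_α` of the surrogate MDP M_α and the
expected α-optimal q-function `q^E` (fixed point of `T^{Eq}_α`) are related by
`q*_α(s,a) = (1-α) q^E(s,a) + f(s)` with `f(s) = α Σ_{a'} π₀(a'|s) q^E(s,a')`;
consequently they have the same argmax sets in every state. -/
theorem surrogate_q_eq_expected_q_up_to_state_function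
    {S A : Type*} [Fintype S] [Fintype A] [Nonempty S] [Nonempty A]
    (γ α : ℝ) (hγ0 : 0 ≤ γ) (hγ1 : γ < 1) (hα0 : 0 ≤ α) (hα1 : α < 1)
    (r : S → A → ℝ) (P : S → A → S → ℝ) (π0 : S → A → ℝ)
    (hP : ∀ s a, (∀ s', 0 ≤ P s a s') ∧ ∑ s', P s a s' = 1)
    (hπ0 : ∀ s, (∀ a, 0 ≤ π0 s a) ∧ ∑ a, π0 s a = 1)
    (qα qE : S → A → ℝ)
    (hqα : ∀ s a, qα s a =
      ((1 - α) * r s a + α * ∑ b, π0 s b * r s b)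
        + γ * ∑ s', ((1 - α) * P s a s' + α * ∑ b, π0 s b * P s b s')
            * (⨆ a' : A, qα s' a'))
    (hqE : TEq γ α r P π0 qE = qE) :
    (∀ s a, qα s a = (1 - α) * qE s a + α * ∑ a', π0 s a' * qE s a') ∧
      ∀ s : S, {a : A | ∀ b, qα s b ≤ qα s a} = {a : A | ∀ b, qE s b ≤ qE s a} :=
  surrogate_q_eq_expected_q_up_to_state_function_general γ α hγ0 hγ1 hα0 hα1 r P π0 hP hπ0 qα qE hqα
    hqE
end
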